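/- Mirror descent regret bound: under the assumptions of the strong-convexity lemma (Ψ Legendre and α-strongly convex on A with respect to ‖·‖, K closed convex with K∩A ≠ ∅), if the iterates satisfy θ^{(k)} = argmin_{θ ∈ K∩A}{ η⟨ĝ_k, θ⟩ + D_Ψ(θ, θ^{(k-1)}) } for a constant step size η > 0, then for any θ* ∈ K∩A: Σ_{k=1}^T ⟨ĝ_k, θ^{(k-1)} - θ*⟩ ≤ D_Ψ(θ*, θ^{(0)})/η + (η/(2α)) Σ_{k=1}^T ‖ĝ_k‖_*². -/

import Mathlib

/-!
The first-order optimality condition of the proximal step, rewritten with the three-point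
identity for Bregman divergences, gives
`η⟪g_k, θ_k - θ*⟫ ≤ D(θ*, θ_{k-1}) - D(θ*, θ_k) - D(θ_k, θ_{k-1})`.
The remaining term `η⟪g_k, θ_{k-1} - θ_k⟫` is at most `η‖g_k‖_* ‖θ_k - θ_{k-1}‖`, which Young's
inequality splits into `η²‖g_k‖_*²/(2α) + (α/2)‖θ_k - θ_{k-1}‖²`; strong convexity absorbs the
second summand into `D(θ_k, θ_{k-1})`. Summing over `k`, the divergences to `θ*` telescope.
-/

open Finset
open scoped RealInnerProductSpace Topology

lemma mul_le_div_sq_add_sq {η α s r : ℝ} (hα : 0 < α) :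
    η * (s * r) ≤ η ^ 2 / (2 * α) * s ^ 2 + α / 2 * r ^ 2 := by
  have hsq : 0 ≤ (η * s - α * r) ^ 2 / (2 * α) := by positivity
  have hexp : (η * s - α * r) ^ 2 / (2 * α) =
      η ^ 2 / (2 * α) * s ^ 2 + α / 2 * r ^ 2 - η * (s * r) := by
    field_simp
    ring
  linarith

section Bregman

variable {E : Type*} [NormedAddCommGroup E] [InnerProductSpace ℝ E]

def bregmanDiv (Ψ : E → ℝ) (Ψ' : E → E) (a b : E) : ℝ :=
  Ψ a - Ψ b - ⟪Ψ' b, a - b⟫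

lemma bregmanDiv_three_point (Ψ : E → ℝ) (Ψ' : E → E) (a b c : E) :
    ⟪Ψ' b - Ψ' c, a - b⟫ =
      bregmanDiv Ψ Ψ' a c - bregmanDiv Ψ Ψ' a b - bregmanDiv Ψ Ψ' b c := by
  simp only [bregmanDiv, inner_sub_left, inner_sub_right]
  ring

lemma hasGradientAt_linear_add_bregmanDiv [CompleteSpace E] {Ψ : E → ℝ} {Ψ' : E → E} {b : E}
    (hΨ : HasGradientAt Ψ (Ψ' b) b) (η : ℝ) (g c : E) :
    HasGradientAt (fun x => η * ⟪g, x⟫ + bregmanDiv Ψ Ψ' x c) (η • g + (Ψ' b - Ψ' c)) b := by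
  rw [hasGradientAt_iff_hasFDerivAt] at hΨ ⊢
  have hlin : ∀ v : E, HasFDerivAt (fun x => ⟪v, x⟫) (innerSL ℝ v) b :=
    fun v => (innerSL ℝ v).hasFDerivAt
  have hsum := ((hlin g).const_mul η).add
    ((hΨ.sub_const (Ψ c)).sub ((hlin (Ψ' c)).sub_const ⟪Ψ' c, c⟫))
  refine (hsum.congr_fderiv ?_).congr_of_eventuallyEq (.of_forall fun x => ?_)
  · ext v
    simp
  · simp only [Pi.add_apply, Pi.sub_apply, bregmanDiv, inner_sub_right]

lemma IsMinOn.inner_gradient_sub_nonneg [CompleteSpace E] {f : E → ℝ} {f' : E} {K A : Set E}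
    {a b : E} (hK : Convex ℝ K) (hbK : b ∈ K) (haK : a ∈ K) (hA : A ∈ 𝓝 b)
    (hmin : IsMinOn f (K ∩ A) b) (hf : HasGradientAt f f' b) :
    0 ≤ ⟪f', a - b⟫ := by
  have hloc : IsLocalMinOn f K b := by
    filter_upwards [self_mem_nhdsWithin, mem_nhdsWithin_of_mem_nhds hA] with x hxK hxA
    exact hmin ⟨hxK, hxA⟩
  have hcone : a - b ∈ posTangentConeAt K b :=
    sub_mem_posTangentConeAt_of_segment_subset (hK.segment_subset hbK haK)
  simpa using hloc.hasFDerivWithinAt_nonneg hf.hasFDerivAt.hasFDerivWithinAt hcone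

lemma inner_le_bregmanDiv_sub_add {Ψ : E → ℝ} {Ψ' : E → E} {η α r s : ℝ} {a b c g : E}
    (hη : 0 < η) (hα : 0 < α)
    (hopt : 0 ≤ ⟪η • g + (Ψ' b - Ψ' c), a - b⟫)
    (hsc : α / 2 * r ^ 2 ≤ bregmanDiv Ψ Ψ' b c)
    (hpair : ⟪g, c - b⟫ ≤ s * r) :
    ⟪g, c - a⟫ ≤
      bregmanDiv Ψ Ψ' a c / η - bregmanDiv Ψ Ψ' a b / η + η / (2 * α) * s ^ 2 := by
  rw [inner_add_left, real_inner_smul_left, bregmanDiv_three_point] at hopt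
  have hsplit : ⟪g, c - a⟫ = ⟪g, c - b⟫ - ⟪g, a - b⟫ := by
    rw [← inner_sub_right, sub_sub_sub_cancel_right]
  have hyoung := mul_le_div_sq_add_sq (η := η) (s := s) (r := r) hα
  have hpair' : η * ⟪g, c - b⟫ ≤ η * (s * r) := mul_le_mul_of_nonneg_left hpair hη.le
  have key : η * ⟪g, c - a⟫ ≤
      bregmanDiv Ψ Ψ' a c - bregmanDiv Ψ Ψ' a b + η ^ 2 / (2 * α) * s ^ 2 := by
    rw [hsplit]
    linarith
  calc ⟪g, c - a⟫ = η * ⟪g, c - a⟫ / η := by field_simp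
    _ ≤ (bregmanDiv Ψ Ψ' a c - bregmanDiv Ψ Ψ' a b + η ^ 2 / (2 * α) * s ^ 2) / η := by
        gcongr
    _ = _ := by field_simp

end Bregman

namespace Seminorm

variable {E : Type*} [NormedAddCommGroup E] [InnerProductSpace ℝ E] [FiniteDimensional ℝ E]
  (p : Seminorm ℝ E)

lemma exists_pos_mul_norm_le [Nontrivial E] (hp : ∀ x, p x = 0 → x = 0) :
    ∃ m > 0, ∀ x, m * ‖x‖ ≤ p x := by
  have hcont : Continuous p := p.convexOn.locallyLipschitz.continuous
  obtain ⟨u, hu, humin⟩ := (isCompact_sphere (0 : E) 1).exists_isMinOn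
    (NormedSpace.sphere_nonempty.2 zero_le_one) hcont.continuousOn
  have hu0 : u ≠ 0 := ne_zero_of_mem_unit_sphere ⟨u, hu⟩
  refine ⟨p u, (apply_nonneg p u).lt_of_ne fun h => hu0 (hp u h.symm), fun x => ?_⟩
  rcases eq_or_ne x 0 with rfl | hx
  · simp
  have hx' : ‖x‖⁻¹ • x ∈ Metric.sphere (0 : E) 1 := by
    simp [norm_smul, norm_ne_zero_iff.2 hx]
  have := humin hx'
  rw [Set.mem_ofPred_eq, map_smul_eq_mul, norm_inv, norm_norm] at this
  rwa [le_inv_mul_iff₀ (norm_pos_iff.2 hx), mul_comm] at this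

lemma inner_le_sSup_mul (hp : ∀ x, p x = 0 → x = 0) (g v : E) :
    ⟪g, v⟫ ≤ sSup {r | ∃ y, p y ≤ 1 ∧ r = ⟪g, y⟫} * p v := by
  rcases eq_or_ne v 0 with rfl | hv
  · simp
  have : Nontrivial E := ⟨⟨v, 0, hv⟩⟩
  obtain ⟨m, hm, hmp⟩ := p.exists_pos_mul_norm_le hp
  have hbdd : BddAbove {r | ∃ y, p y ≤ 1 ∧ r = ⟪g, y⟫} := by
    refine ⟨‖g‖ * m⁻¹, ?_⟩
    rintro r ⟨y, hy, rfl⟩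
    have hy' : ‖y‖ ≤ m⁻¹ := by
      have := (hmp y).trans hy
      rwa [← le_inv_mul_iff₀ hm, mul_one] at this
    exact (real_inner_le_norm g y).trans (by gcongr)
  have hpv : 0 < p v := (apply_nonneg p v).lt_of_ne fun h => hv (hp v h.symm)
  have hmem : (p v)⁻¹ * ⟪g, v⟫ ∈ {r | ∃ y, p y ≤ 1 ∧ r = ⟪g, y⟫} :=
    ⟨(p v)⁻¹ • v, by simp [map_smul_eq_mul, abs_of_pos hpv, hpv.ne'],
      by rw [real_inner_smul_right]⟩
  have := le_csSup hbdd hmem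
  rwa [inv_mul_le_iff₀ hpv, mul_comm] at this

end Seminorm

lemma sum_range_le_of_le_sub_succ_add {x y Φ : ℕ → ℝ} {T : ℕ}
    (h : ∀ k < T, x k ≤ Φ k - Φ (k + 1) + y k) (hΦ : 0 ≤ Φ T) :
    ∑ k ∈ range T, x k ≤ Φ 0 + ∑ k ∈ range T, y k :=
  calc ∑ k ∈ range T, x k ≤ ∑ k ∈ range T, (Φ k - Φ (k + 1) + y k) :=
        sum_le_sum fun k hk => h k (mem_range.1 hk)
    _ = Φ 0 - Φ T + ∑ k ∈ range T, y k := by rw [sum_add_distrib, sum_range_sub']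
    _ ≤ Φ 0 + ∑ k ∈ range T, y k := by linarith

theorem mirror_descent_regret_bound_general
    {d : ℕ} (A K : Set (EuclideanSpace ℝ (Fin d)))
    (hK : Convex ℝ K)
    (Ψ : EuclideanSpace ℝ (Fin d) → ℝ)
    (Ψ' : EuclideanSpace ℝ (Fin d) → EuclideanSpace ℝ (Fin d))
    (hdiff : ∀ x ∈ interior A, HasGradientAt Ψ (Ψ' x) x)
    (N : EuclideanSpace ℝ (Fin d) → ℝ)
    (hNtri : ∀ x y, N (x + y) ≤ N x + N y)
    (hNhom : ∀ (c : ℝ) x, N (c • x) = |c| * N x)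
    (hNdef : ∀ x, N x = 0 → x = 0)
    (Ndual : EuclideanSpace ℝ (Fin d) → ℝ)
    (hNdual : ∀ g, Ndual g = sSup {r : ℝ | ∃ y, N y ≤ 1 ∧ r = (inner ℝ g y : ℝ)})
    (α : ℝ) (hα : 0 < α)
    (hstrong : ∀ θ ∈ interior A, ∀ θ' ∈ A,
      (inner ℝ (Ψ' θ) (θ' - θ) : ℝ) + α / 2 * (N (θ' - θ)) ^ 2 ≤ Ψ θ' - Ψ θ)
    (D : EuclideanSpace ℝ (Fin d) → EuclideanSpace ℝ (Fin d) → ℝ)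
    (hD : ∀ a b, D a b = Ψ a - Ψ b - (inner ℝ (Ψ' b) (a - b) : ℝ))
    (T : ℕ) (η : ℝ) (hη : 0 < η)
    (θ : ℕ → EuclideanSpace ℝ (Fin d))
    (gest : ℕ → EuclideanSpace ℝ (Fin d))
    (hmem : ∀ k ≤ T, θ k ∈ K ∩ A) (hint : ∀ k ≤ T, θ k ∈ interior A)
    (hiter : ∀ k, 1 ≤ k → k ≤ T → ∀ θ' ∈ K ∩ A,
      η * (inner ℝ (gest k) (θ k) : ℝ) + D (θ k) (θ (k - 1)) ≤
        η * (inner ℝ (gest k) θ' : ℝ) + D θ' (θ (k - 1)))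
    (θstar : EuclideanSpace ℝ (Fin d)) (hθstar : θstar ∈ K ∩ A) :
    ∑ k ∈ Finset.range T, (inner ℝ (gest (k + 1)) (θ k - θstar) : ℝ) ≤
      D θstar (θ 0) / η +
        η / (2 * α) * ∑ k ∈ Finset.range T, (Ndual (gest (k + 1))) ^ 2 := by
  obtain rfl : D = bregmanDiv Ψ Ψ' := funext₂ hD
  let p : Seminorm ℝ (EuclideanSpace ℝ (Fin d)) :=
    Seminorm.of N hNtri fun c x => by rw [Real.norm_eq_abs, hNhom]
  have hsc : ∀ x ∈ interior A, ∀ y ∈ A, α / 2 * N (y - x) ^ 2 ≤ bregmanDiv Ψ Ψ' y x :=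
    fun x hx y hy => by have := hstrong x hx y hy; unfold bregmanDiv; linarith
  have hstep : ∀ k < T, ⟪gest (k + 1), θ k - θstar⟫ ≤
      bregmanDiv Ψ Ψ' θstar (θ k) / η - bregmanDiv Ψ Ψ' θstar (θ (k + 1)) / η +
        η / (2 * α) * Ndual (gest (k + 1)) ^ 2 := by
    intro k hk
    have hnext := hint (k + 1) hk
    have hmin : IsMinOn (fun x => η * ⟪gest (k + 1), x⟫ + bregmanDiv Ψ Ψ' x (θ k)) (K ∩ A)
        (θ (k + 1)) := hiter (k + 1) le_add_self hk
    have hpair : ⟪gest (k + 1), θ k - θ (k + 1)⟫ ≤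
        Ndual (gest (k + 1)) * p (θ (k + 1) - θ k) := by
      rw [hNdual, map_sub_rev p]
      exact p.inner_le_sSup_mul hNdef _ _
    exact inner_le_bregmanDiv_sub_add hη hα
      (hmin.inner_gradient_sub_nonneg hK (hmem (k + 1) hk).1 hθstar.1
        (mem_interior_iff_mem_nhds.1 hnext)
        (hasGradientAt_linear_add_bregmanDiv (hdiff _ hnext) η _ _))
      (hsc _ (hint k hk.le) _ (hmem (k + 1) hk).2) hpair
  have hlast : 0 ≤ bregmanDiv Ψ Ψ' θstar (θ T) / η :=
    div_nonneg ((hsc _ (hint T le_rfl) _ hθstar.2).trans' (by positivity)) hη.le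
  simpa only [Finset.mul_sum] using sum_range_le_of_le_sub_succ_add hstep hlast

/-- Mirror descent regret bound: with `Ψ` Legendre and `α`-strongly convex w.r.t. a
norm `N` (dual norm `Ndual`), `K` closed convex meeting `A`, if the iterates satisfy
`θ^{(k)} = argmin_{θ ∈ K ∩ A} { η ⟨ĝ_k, θ⟩ + D_Ψ(θ, θ^{(k-1)}) }` for a constant step
size `η > 0`, then for any `θ* ∈ K ∩ A`:
`Σ_{k=1}^T ⟨ĝ_k, θ^{(k-1)} - θ*⟩ ≤ D_Ψ(θ*, θ^{(0)})/η + (η/(2α)) Σ_{k=1}^T Ndual(ĝ_k)²`. -/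
theorem mirror_descent_regret_bound
    {d : ℕ} (A K : Set (EuclideanSpace ℝ (Fin d)))
    (hK : Convex ℝ K) (hKc : IsClosed K) (hKA : (K ∩ A).Nonempty)
    (Ψ : EuclideanSpace ℝ (Fin d) → ℝ)
    (Ψ' : EuclideanSpace ℝ (Fin d) → EuclideanSpace ℝ (Fin d))
    (hdiff : ∀ x ∈ interior A, HasGradientAt Ψ (Ψ' x) x)
    (N : EuclideanSpace ℝ (Fin d) → ℝ)
    (hNtri : ∀ x y, N (x + y) ≤ N x + N y)
    (hNhom : ∀ (c : ℝ) x, N (c • x) = |c| * N x)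
    (hNdef : ∀ x, N x = 0 → x = 0)
    (Ndual : EuclideanSpace ℝ (Fin d) → ℝ)
    (hNdual : ∀ g, Ndual g = sSup {r : ℝ | ∃ y, N y ≤ 1 ∧ r = (inner ℝ g y : ℝ)})
    (α : ℝ) (hα : 0 < α)
    (hstrong : ∀ θ ∈ interior A, ∀ θ' ∈ A,
      (inner ℝ (Ψ' θ) (θ' - θ) : ℝ) + α / 2 * (N (θ' - θ)) ^ 2 ≤ Ψ θ' - Ψ θ)
    (D : EuclideanSpace ℝ (Fin d) → EuclideanSpace ℝ (Fin d) → ℝ)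
    (hD : ∀ a b, D a b = Ψ a - Ψ b - (inner ℝ (Ψ' b) (a - b) : ℝ))
    (T : ℕ) (η : ℝ) (hη : 0 < η)
    (θ : ℕ → EuclideanSpace ℝ (Fin d))
    (gest : ℕ → EuclideanSpace ℝ (Fin d))
    (hmem : ∀ k ≤ T, θ k ∈ K ∩ A) (hint : ∀ k ≤ T, θ k ∈ interior A)
    (hiter : ∀ k, 1 ≤ k → k ≤ T → ∀ θ' ∈ K ∩ A,
      η * (inner ℝ (gest k) (θ k) : ℝ) + D (θ k) (θ (k - 1)) ≤
        η * (inner ℝ (gest k) θ' : ℝ) + D θ' (θ (k - 1)))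
    (θstar : EuclideanSpace ℝ (Fin d)) (hθstar : θstar ∈ K ∩ A) :
    ∑ k ∈ Finset.range T, (inner ℝ (gest (k + 1)) (θ k - θstar) : ℝ) ≤
      D θstar (θ 0) / η +
        η / (2 * α) * ∑ k ∈ Finset.range T, (Ndual (gest (k + 1))) ^ 2 :=
  mirror_descent_regret_bound_general A K hK Ψ Ψ' hdiff N hNtri hNhom hNdef Ndual hNdual α hα
    hstrong D hD T η hη θ gest hmem hint hiter θstar hθstar
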